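/- With A and A' as in the star-extension construction (A' has one extra state q, all states initial and final, and weight-0 ⋆-transitions connecting final states to initial states of A directly and through q), the following inequalities hold: min(inf_{u∈Σ⁺} [[A]](u)/|u|, 0) ≤ inf_{w∈(Σ')⁺} [[A']](w)/|w| and inf_{w∈(Σ')⁺} [[A']](w)/|w| ≤ inf_{u∈Σ⁺} [[A]](u)/(|u|+1). In particular, [[A]](w) ≥ 0 for all w ∈ Σ⁺ if and only if [[A']](w) ≥ 0 for all w ∈ (Σ')⁺. -/

import Mathlib

open Filter

/-- The tropical (max-plus) semiring ℤ ∪ {-∞}: addition is max (lattice sup),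
`+` is the tropical product with `⊥` absorbing. -/
abbrev Zmax : Type := WithBot ℤ

/-- Square matrices over `Zmax`. -/
abbrev Mat (d : ℕ) : Type := Fin d → Fin d → Zmax

/-- Tropical matrix product: `(A⊗B) i j = max_k (A i k + B k j)`. -/
def tmul {d : ℕ} (A B : Mat d) : Mat d :=
  fun i j => Finset.univ.sup fun k => A i k + B k j

/-- Maximal entry of a matrix (`-∞` for the all-`⊥` matrix). -/
def tnorm {d : ℕ} (M : Mat d) : Zmax :=
  Finset.univ.sup fun i => Finset.univ.sup fun j => M i j

/-- Product of a list of matrices (junk value, the all-`⊥` matrix, on `[]`;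
only used on nonempty lists). -/
def prodL {d : ℕ} : List (Mat d) → Mat d
  | [] => fun _ _ => ⊥
  | [M] => M
  | M :: N :: L => tmul M (prodL (N :: L))

/-- Tropical identity matrix. -/
def tId (d : ℕ) : Mat d := fun i j => if i = j then (0 : Zmax) else ⊥

/-- Tropical matrix power. -/
def tpow {d : ℕ} (M : Mat d) : ℕ → Mat d
  | 0 => tId d
  | n+1 => tmul M (tpow M n)

/-- The subsemigroup generated by a set of matrices: all nonempty finite products. -/
def semi {d : ℕ} (Γ : Set (Mat d)) : Set (Mat d) :=
  {M | ∃ L : List (Mat d), L ≠ [] ∧ (∀ N ∈ L, N ∈ Γ) ∧ prodL L = M}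

/-- Embedding of `Zmax = ℤ ∪ {-∞}` into `EReal`. -/
noncomputable def z2e (x : Zmax) : EReal :=
  WithBot.recBotCoe ⊥ (fun n : ℤ => ((n : ℝ) : EReal)) x

/-- `minNorm Γ ℓ` is the minimum over all products of `ℓ` matrices from `Γ`
of `‖M₁⋯M_ℓ‖_∞ / ℓ`, as an extended real. -/
noncomputable def minNorm {d : ℕ} (Γ : Set (Mat d)) (ℓ : ℕ) : EReal :=
  sInf {x | ∃ L : List (Mat d), L.length = ℓ ∧ (∀ N ∈ L, N ∈ Γ) ∧
    x = z2e (tnorm (prodL L)) / (ℓ : EReal)}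

/-- Joint spectral radius: `inf_{ℓ>0} min{ ‖M₁⋯M_ℓ‖_∞/ℓ : Mᵢ ∈ Γ }`. -/
noncomputable def jsr {d : ℕ} (Γ : Set (Mat d)) : EReal :=
  ⨅ (ℓ : ℕ) (_ : 0 < ℓ), minNorm Γ ℓ

/-- Weight of the cycle `c 0 → c 1 → ⋯ → c ℓ → c 0` (length `ℓ+1`),
addition of `Fin (ℓ+1)` being cyclic. -/
def cycWeight {d : ℕ} (M : Mat d) {ℓ : ℕ} (c : Fin (ℓ+1) → Fin d) : Zmax :=
  ∑ k : Fin (ℓ+1), M (c k) (c (k+1))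

/-- Tropical spectral radius of a single matrix: the maximal average weight of
cycles in the graph of `M` (and `-∞` if there is no cycle of finite weight). -/
noncomputable def rho {d : ℕ} (M : Mat d) : EReal :=
  ⨆ (ℓ : ℕ) (c : Fin (ℓ+1) → Fin d), z2e (cycWeight M c) / ((ℓ+1 : ℕ) : EReal)

/-- A critical cycle: a cycle with finite weight whose average weight is `rho M`. -/
def IsCritCycle {d : ℕ} (M : Mat d) {ℓ : ℕ} (c : Fin (ℓ+1) → Fin d) : Prop :=
  cycWeight M c ≠ ⊥ ∧ z2e (cycWeight M c) / ((ℓ+1 : ℕ) : EReal) = rho M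

/-- Edges of the critical graph: edges lying on some critical cycle. -/
def critEdge {d : ℕ} (M : Mat d) (i j : Fin d) : Prop :=
  ∃ (ℓ : ℕ) (c : Fin (ℓ+1) → Fin d) (k : Fin (ℓ+1)),
    IsCritCycle M c ∧ c k = i ∧ c (k+1) = j

/-- Vertices of the critical graph. -/
def critVertex {d : ℕ} (M : Mat d) (i : Fin d) : Prop :=
  ∃ j, critEdge M i j ∨ critEdge M j i

/-- Strongly connected components of the critical graph: maximal sets of critical
vertices that are pairwise connected by paths in the critical graph. -/
def IsSCC {d : ℕ} (M : Mat d) (S : Set (Fin d)) : Prop :=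
  (∀ i ∈ S, critVertex M i) ∧
  (∀ i ∈ S, ∀ j ∈ S, Relation.ReflTransGen (critEdge M) i j) ∧
  (∀ T : Set (Fin d), S ⊆ T → (∀ i ∈ T, critVertex M i) →
    (∀ i ∈ T, ∀ j ∈ T, Relation.ReflTransGen (critEdge M) i j) → T = S)

/-- Greatest common divisor of a set of natural numbers. -/
noncomputable def setGcd (A : Set ℕ) : ℕ :=
  sInf {g | (∀ a ∈ A, g ∣ a) ∧ ∀ h, (∀ a ∈ A, h ∣ a) → h ∣ g}

/-- Cyclicity of a strongly connected component `S` of the critical graph of `M`: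
the gcd of the lengths of the cycles of the critical graph lying in `S`. -/
noncomputable def cyclicity {d : ℕ} (M : Mat d) (S : Set (Fin d)) : ℕ :=
  setGcd {n | ∃ (ℓ : ℕ) (c : Fin (ℓ+1) → Fin d), n = ℓ + 1 ∧
    (∀ k, critEdge M (c k) (c (k+1))) ∧ (∀ k, c k ∈ S)}

/-- Ultimate rank of a matrix: the sum of the cyclicities of the strongly
connected components of its critical graph. -/
noncomputable def urk {d : ℕ} (M : Mat d) : ℕ :=
  ∑ᶠ (S : Set (Fin d)) (_ : IsSCC M S), cyclicity M S

/-- `k ⊙ M`: add the integer `k` to every entry. -/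
def kadd {d : ℕ} (k : ℤ) (M : Mat d) : Mat d := fun i j => (k : Zmax) + M i j

/-- Value `I M F` computed from an initial row vector, a matrix and a final
column vector. -/
def runVal {d : ℕ} (I : Fin d → Zmax) (M : Mat d) (F : Fin d → Zmax) : Zmax :=
  Finset.univ.sup fun i => Finset.univ.sup fun j => I i + M i j + F j

/-- The star-extension automaton `A'`: one extra state `q` (index `d`), and
`⋆`-labelled weight-0 transitions from final states to initial states, from final
states to `q`, a loop on `q`, and from `q` to initial states. -/
def starMu {α : Type} {d : ℕ} (μ : α → Mat d) (I F : Fin d → Zmax) :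
    α ⊕ Unit → Mat (d + 1)
  | Sum.inl a => fun i j =>
      if hi : (i : ℕ) < d then
        if hj : (j : ℕ) < d then μ a ⟨i, hi⟩ ⟨j, hj⟩ else ⊥
      else ⊥
  | Sum.inr _ => fun i j =>
      if hi : (i : ℕ) < d then
        if hj : (j : ℕ) < d then
          (if F ⟨i, hi⟩ = 0 ∧ I ⟨j, hj⟩ = 0 then (0 : Zmax) else ⊥)
        else (if F ⟨i, hi⟩ = 0 then (0 : Zmax) else ⊥)
      else
        if hj : (j : ℕ) < d then (if I ⟨j, hj⟩ = 0 then (0 : Zmax) else ⊥)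
        else (0 : Zmax)

/-!
Lower bound. Put `r = min (inf_u [[A]](u)/|u|, 0)` and cut a word of `A'` at its `⋆`-letters,
`w = u₀ ⋆ u₁ ⋆ ⋯ ⋆ u_k`. Starting in an initial state of `A` or in `q`, a run of `A'` can follow
an accepting run of `A` on each nonempty block `uᵢ` and use each `⋆` to jump back to an initial
state, or to `q` when the next block is empty; so `[[A']](w) ≥ Σ |uᵢ| r ≥ |w| r`.

Upper bound. On `(⋆u)^m ⋆` every run of `A'` must read each copy of `u` from an initial to a final
state of `A`, hence `[[A']]((⋆u)^m ⋆) ≤ m [[A]](u)`, and the averages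
`m [[A]](u) / (m (|u| + 1) + 1)` tend to `[[A]](u) / (|u| + 1)`.
-/

section Tropical

variable {d : ℕ}

lemma zmax_sup_add {ι : Type*} (s : Finset ι) (f : ι → Zmax) (c : Zmax) :
    s.sup f + c = s.sup fun i => f i + c := by
  rcases s.eq_empty_or_nonempty with rfl | hs
  · simp
  · obtain ⟨i, hi, hsup⟩ := Finset.exists_mem_eq_sup s hs f
    refine le_antisymm ?_ (Finset.sup_le fun j hj => add_le_add_left (Finset.le_sup hj) c)
    rw [hsup]
    exact Finset.le_sup (f := fun i => f i + c) hi

lemma zmax_add_sup {ι : Type*} (s : Finset ι) (f : ι → Zmax) (c : Zmax) :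
    c + s.sup f = s.sup fun i => c + f i := by
  simp only [add_comm c, zmax_sup_add]

lemma sup_univ_fin_succ {β : Type*} [SemilatticeSup β] [OrderBot β] (f : Fin (d + 1) → β) :
    Finset.univ.sup f = f (Fin.last d) ⊔ Finset.univ.sup fun i : Fin d => f i.castSucc := by
  rw [Fin.univ_castSuccEmb, Finset.sup_cons, Finset.sup_map]
  rfl

lemma le_tmul (A B : Mat d) (i k j : Fin d) : A i k + B k j ≤ tmul A B i j :=
  Finset.le_sup (f := fun k => A i k + B k j) (Finset.mem_univ k)

lemma tmul_assoc (A B C : Mat d) : tmul (tmul A B) C = tmul A (tmul B C) := by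
  funext i j
  simp only [tmul, zmax_sup_add, zmax_add_sup, add_assoc]
  exact Finset.sup_comm _ _ _

lemma prodL_cons (M : Mat d) {L : List (Mat d)} (h : L ≠ []) :
    prodL (M :: L) = tmul M (prodL L) := by
  cases L with
  | nil => exact absurd rfl h
  | cons N L => rfl

lemma prodL_append {L₁ L₂ : List (Mat d)} (h₁ : L₁ ≠ []) (h₂ : L₂ ≠ []) :
    prodL (L₁ ++ L₂) = tmul (prodL L₁) (prodL L₂) := by
  induction L₁ with
  | nil => exact absurd rfl h₁
  | cons M L ih =>
    rcases eq_or_ne L [] with rfl | hL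
    · exact prodL_cons M h₂
    · rw [List.cons_append, prodL_cons M (by simp [hL]), ih hL, prodL_cons M hL, tmul_assoc]

lemma le_tnorm (P : Mat d) (i j : Fin d) : P i j ≤ tnorm P :=
  (Finset.le_sup (Finset.mem_univ j)).trans
    (Finset.le_sup (f := fun i => Finset.univ.sup fun j => P i j) (Finset.mem_univ i))

lemma tnorm_le {P : Mat d} {c : Zmax} (h : ∀ i j, P i j ≤ c) : tnorm P ≤ c :=
  Finset.sup_le fun i _ => Finset.sup_le fun j _ => h i j

lemma le_runVal (I : Fin d → Zmax) (M : Mat d) (F : Fin d → Zmax) (i j : Fin d) :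
    I i + M i j + F j ≤ runVal I M F :=
  (Finset.le_sup (f := fun j => I i + M i j + F j) (Finset.mem_univ j)).trans
    (Finset.le_sup (f := fun i => Finset.univ.sup fun j => I i + M i j + F j) (Finset.mem_univ i))

lemma runVal_add_le {I F : Fin d → Zmax} {M : Mat d} {a c : Zmax}
    (h : ∀ i j, I i + M i j + F j + a ≤ c) : runVal I M F + a ≤ c := by
  simp only [runVal, zmax_sup_add]
  exact Finset.sup_le fun i _ => Finset.sup_le fun j _ => h i j

lemma runVal_le {I F : Fin d → Zmax} {M : Mat d} {c : Zmax}
    (h : ∀ i j, I i + M i j + F j ≤ c) : runVal I M F ≤ c := by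
  simpa using runVal_add_le (a := 0) (by simpa using h)

lemma runVal_le_tnorm {I F : Fin d → Zmax} (hI : ∀ i, I i ≤ 0) (hF : ∀ j, F j ≤ 0) (M : Mat d) :
    runVal I M F ≤ tnorm M :=
  runVal_le fun i j => calc
    I i + M i j + F j ≤ 0 + M i j + 0 := add_le_add (add_le_add_left (hI i) _) (hF j)
    _ ≤ tnorm M := by simpa using le_tnorm M i j

end Tropical

section Extension

variable {α : Type} {d : ℕ}

def liftMat (M : Mat d) : Mat (d + 1) := fun i j =>
  if hi : (i : ℕ) < d then
    if hj : (j : ℕ) < d then M ⟨i, hi⟩ ⟨j, hj⟩ else ⊥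
  else ⊥

@[simp] lemma liftMat_castSucc (M : Mat d) (i j : Fin d) :
    liftMat M i.castSucc j.castSucc = M i j := by
  simp [liftMat]

@[simp] lemma liftMat_last_left (M : Mat d) (j : Fin (d + 1)) : liftMat M (Fin.last d) j = ⊥ := by
  simp [liftMat]

@[simp] lemma liftMat_last_right (M : Mat d) (i : Fin (d + 1)) :
    liftMat M i (Fin.last d) = ⊥ := by
  simp [liftMat]

lemma tmul_liftMat (A B : Mat d) : tmul (liftMat A) (liftMat B) = liftMat (tmul A B) := by
  funext i j
  induction i using Fin.lastCases <;> induction j using Fin.lastCases <;>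
    simp [tmul, sup_univ_fin_succ]

lemma prodL_map_liftMat {L : List (Mat d)} (h : L ≠ []) :
    prodL (L.map liftMat) = liftMat (prodL L) := by
  induction L with
  | nil => exact absurd rfl h
  | cons M L ih =>
    rcases eq_or_ne L [] with rfl | hL
    · rfl
    · rw [List.map_cons, prodL_cons _ (by simpa using hL), ih hL, prodL_cons M hL, tmul_liftMat]

def snocZero (v : Fin d → Zmax) : Fin (d + 1) → Zmax :=
  Fin.snoc (α := fun _ => Zmax) v 0

@[simp] lemma snocZero_castSucc (v : Fin d → Zmax) (i : Fin d) : snocZero v i.castSucc = v i :=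
  Fin.snoc_castSucc ..

@[simp] lemma snocZero_last (v : Fin d → Zmax) : snocZero v (Fin.last d) = 0 :=
  Fin.snoc_last ..

def starMat (I F : Fin d → Zmax) : Mat (d + 1) :=
  starMu (α := Empty) Empty.elim I F (Sum.inr ())

lemma starMu_inr (μ : α → Mat d) (I F : Fin d → Zmax) (t : Unit) :
    starMu μ I F (Sum.inr t) = starMat I F := rfl

lemma prodL_map_inl (μ : α → Mat d) (I F : Fin d → Zmax) {u : List α} (hu : u ≠ []) :
    prodL ((u.map Sum.inl).map (starMu μ I F)) = liftMat (prodL (u.map μ)) := by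
  rw [List.map_map, ← prodL_map_liftMat (by simpa using hu), List.map_map]
  rfl

lemma starMat_apply (I F : Fin d → Zmax) (i j : Fin (d + 1)) :
    starMat I F i j = if snocZero F i = 0 ∧ snocZero I j = 0 then 0 else ⊥ := by
  simp only [starMat, starMu, snocZero, Fin.snoc, Fin.castLT, cast_eq]
  split_ifs <;> simp_all

lemma starMat_le_zero (I F : Fin d → Zmax) (i j : Fin (d + 1)) : starMat I F i j ≤ 0 := by
  rw [starMat_apply]
  split_ifs <;> simp

end Extension

section RowShape

variable {d : ℕ} (I F : Fin d → Zmax)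

def FinalRowsMax (Q : Mat (d + 1)) : Prop :=
  ∀ j : Fin d, F j = 0 → ∀ k l, Q k l ≤ Q j.castSucc l

def NonfinalRowsBot (Q : Mat (d + 1)) : Prop :=
  ∀ j : Fin d, F j ≠ 0 → ∀ l, Q j.castSucc l = ⊥

variable {F}

lemma FinalRowsMax.tmul {Q : Mat (d + 1)} (hQ : FinalRowsMax F Q) (P : Mat (d + 1)) :
    FinalRowsMax F (tmul Q P) :=
  fun j hj k l => Finset.sup_le fun m _ =>
    (add_le_add_left (hQ j hj k m) _).trans (le_tmul Q P _ m l)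

lemma NonfinalRowsBot.tmul {Q : Mat (d + 1)} (hQ : NonfinalRowsBot F Q) (P : Mat (d + 1)) :
    NonfinalRowsBot F (tmul Q P) :=
  fun j hj l => le_bot_iff.1 <| Finset.sup_le fun m _ => by simp [hQ j hj m]

lemma finalRowsMax_starMat : FinalRowsMax F (starMat I F) := by
  intro j hj k l
  simp only [starMat_apply, snocZero_castSucc, hj, true_and]
  split_ifs <;> simp_all

lemma nonfinalRowsBot_starMat : NonfinalRowsBot F (starMat I F) := by
  intro j hj l
  simp [starMat_apply, hj]

lemma finalRowsMax_prodL_starMat_cons (L : List (Mat (d + 1))) :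
    FinalRowsMax F (prodL (starMat I F :: L)) := by
  rcases eq_or_ne L [] with rfl | hL
  · exact finalRowsMax_starMat I
  · rw [prodL_cons _ hL]
    exact (finalRowsMax_starMat I).tmul _

lemma nonfinalRowsBot_prodL_starMat_cons (L : List (Mat (d + 1))) :
    NonfinalRowsBot F (prodL (starMat I F :: L)) := by
  rcases eq_or_ne L [] with rfl | hL
  · exact nonfinalRowsBot_starMat I
  · rw [prodL_cons _ hL]
    exact (nonfinalRowsBot_starMat I).tmul _

end RowShape

section StartValue

variable {d : ℕ} {I F : Fin d → Zmax}

/-- The value of `P` in `A'` when only `q` and the initial states of `A` are initial. -/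
def startVal (I : Fin d → Zmax) (P : Mat (d + 1)) : Zmax :=
  runVal (snocZero I) P 0

lemma snocZero_eq_zero_or_bot (hI : ∀ i, I i = 0 ∨ I i = ⊥) (k : Fin (d + 1)) :
    snocZero I k = 0 ∨ snocZero I k = ⊥ := by
  induction k using Fin.lastCases <;> simp [hI]

lemma le_startVal (P : Mat (d + 1)) {k : Fin (d + 1)} (hk : snocZero I k = 0) (l : Fin (d + 1)) :
    P k l ≤ startVal I P := by
  simpa [hk, startVal] using le_runVal (snocZero I) P 0 k l

lemma startVal_le_tnorm (hI : ∀ i, I i = 0 ∨ I i = ⊥) (P : Mat (d + 1)) :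
    startVal I P ≤ tnorm P :=
  runVal_le_tnorm (fun k => by rcases snocZero_eq_zero_or_bot hI k with h | h <;> simp [h])
    (fun _ => le_rfl) P

lemma zero_le_startVal_starMat (I F : Fin d → Zmax) : 0 ≤ startVal I (starMat I F) := by
  simpa [starMat_apply] using le_startVal (starMat I F) (snocZero_last I) (Fin.last d)

lemma runVal_le_startVal_liftMat (hF : ∀ i, F i = 0 ∨ F i = ⊥) (M : Mat d) :
    runVal I M F ≤ startVal I (liftMat M) := by
  refine runVal_le fun i j => ?_
  rcases hF j with hj | hj
  · simpa [hj, startVal] using le_runVal (snocZero I) (liftMat M) 0 i.castSucc j.castSucc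
  · simp [hj]

lemma startVal_le_startVal_starMat_tmul (hI : ∀ i, I i = 0 ∨ I i = ⊥) (P : Mat (d + 1)) :
    startVal I P ≤ startVal I (tmul (starMat I F) P) := by
  refine runVal_le fun k j => ?_
  rcases snocZero_eq_zero_or_bot hI k with hk | hk
  · calc snocZero I k + P k j + 0 = starMat I F (Fin.last d) k + P k j := by
          simp [starMat_apply, hk]
      _ ≤ tmul (starMat I F) P (Fin.last d) j := le_tmul _ _ _ _ _
      _ ≤ startVal I (tmul (starMat I F) P) := le_startVal _ (snocZero_last I) j
  · simp [hk]

/-- An accepting run of `A` ends in a final state `j`, and row `j` of `Q` dominates the rows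
from which `startVal I Q` is read. -/
lemma runVal_add_startVal_le (hI : ∀ i, I i = 0 ∨ I i = ⊥) (hF : ∀ i, F i = 0 ∨ F i = ⊥)
    (M : Mat d) {Q : Mat (d + 1)} (hQ : FinalRowsMax F Q) :
    runVal I M F + startVal I Q ≤ startVal I (tmul (liftMat M) Q) := by
  refine runVal_add_le fun i j => ?_
  rw [add_comm, startVal]
  refine runVal_add_le fun k l => ?_
  rcases hI i with hi | hi
  · rcases hF j with hj | hj
    · rcases snocZero_eq_zero_or_bot hI k with hk | hk
      · calc snocZero I k + Q k l + 0 + (I i + M i j + F j)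
            ≤ liftMat M i.castSucc j.castSucc + Q j.castSucc l := by
              simpa [hi, hj, hk, add_comm] using add_le_add_left (hQ j hj k l) (M i j)
          _ ≤ tmul (liftMat M) Q i.castSucc l := le_tmul _ _ _ _ _
          _ ≤ startVal I (tmul (liftMat M) Q) := le_startVal _ (by simp [hi]) l
      · simp [hk]
    · simp [hj]
  · simp [hi]

end StartValue

section Rates

lemma z2e_coe (z : ℤ) : z2e (z : Zmax) = ((z : ℝ) : EReal) := rfl

lemma z2e_le_z2e_iff {a b : Zmax} : z2e a ≤ z2e b ↔ a ≤ b := by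
  induction a using WithBot.recBotCoe <;> induction b using WithBot.recBotCoe <;>
    simp [z2e]

lemma z2e_mono : Monotone z2e := fun _ _ => z2e_le_z2e_iff.2

lemma z2e_zero : z2e 0 = 0 := by
  simpa using z2e_coe 0

lemma z2e_add (a b : Zmax) : z2e (a + b) = z2e a + z2e b := by
  induction a using WithBot.recBotCoe <;> induction b using WithBot.recBotCoe
  all_goals first | rfl | simp [z2e, ← WithBot.coe_add]

def RateBound (r : ℝ) (n : ℕ) (x : Zmax) : Prop :=
  ((n * r : ℝ) : EReal) ≤ z2e x

variable {r : ℝ} {m n : ℕ} {x y : Zmax}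

lemma rateBound_zero (r : ℝ) : RateBound r 0 0 := by
  simp [RateBound, z2e_zero]

lemma RateBound.mono (h : RateBound r n x) (hxy : x ≤ y) : RateBound r n y :=
  h.trans (z2e_mono hxy)

lemma RateBound.of_le (h : RateBound r m x) (hr : r ≤ 0) (hmn : m ≤ n) : RateBound r n x :=
  (EReal.coe_le_coe_iff.2 (mul_le_mul_of_nonpos_right (Nat.cast_le.2 hmn) hr)).trans h

lemma RateBound.add (hx : RateBound r m x) (hy : RateBound r n y) :
    RateBound r (m + n) (x + y) := by
  rw [RateBound, z2e_add, Nat.cast_add, add_mul, EReal.coe_add]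
  exact add_le_add hx hy

lemma coe_le_div_iff_rateBound (hn : 0 < n) : (r : EReal) ≤ z2e x / n ↔ RateBound r n x := by
  rw [EReal.le_div_iff_mul_le (by exact_mod_cast hn) (EReal.natCast_ne_top n), RateBound,
    EReal.coe_mul, mul_comm, EReal.coe_coe_eq_natCast]

lemma rateBound_zero_iff : RateBound 0 n x ↔ 0 ≤ x := by
  rw [RateBound, mul_zero, EReal.coe_zero, ← z2e_zero, z2e_le_z2e_iff]

noncomputable def rateInf {ι : Type*} (P : ι → Prop) (f : ι → Zmax) (n : ι → ℕ) : EReal :=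
  sInf {x | ∃ i, P i ∧ x = z2e (f i) / (n i : EReal)}

variable {ι : Type*} {P : ι → Prop} {f : ι → Zmax} {len : ι → ℕ}

lemma rateInf_le {i : ι} (hi : P i) : rateInf P f len ≤ z2e (f i) / (len i : EReal) :=
  sInf_le ⟨i, hi, rfl⟩

lemma coe_le_rateInf_iff (hlen : ∀ i, P i → 0 < len i) (r : ℝ) :
    (r : EReal) ≤ rateInf P f len ↔ ∀ i, P i → RateBound r (len i) (f i) := by
  simp only [rateInf, le_sInf_iff, Set.mem_ofPred_eq]
  constructor
  · exact fun h i hi => (coe_le_div_iff_rateBound (hlen i hi)).1 (h _ ⟨i, hi, rfl⟩)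
  · rintro h _ ⟨i, hi, rfl⟩
    exact (coe_le_div_iff_rateBound (hlen i hi)).2 (h i hi)

lemma zero_le_rateInf_iff (hlen : ∀ i, P i → 0 < len i) :
    0 ≤ rateInf P f len ↔ ∀ i, P i → 0 ≤ f i := by
  simpa [rateBound_zero_iff] using coe_le_rateInf_iff (f := f) hlen 0

end Rates

section LowerBound

variable {α : Type} {d : ℕ} (μ : α → Mat d) (I F : Fin d → Zmax)

/-- `[[A]](u)`. -/
def automVal (u : List α) : Zmax := runVal I (prodL (u.map μ)) F

/-- `[[A']](w)`, all states of `A'` being initial and final. -/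
def starVal (w : List (α ⊕ Unit)) : Zmax := tnorm (prodL (w.map (starMu μ I F)))

variable {μ I F} {r : ℝ}

lemma rateBound_startVal_append (hI : ∀ i, I i = 0 ∨ I i = ⊥) (hF : ∀ i, F i = 0 ∨ F i = ⊥)
    (hr : r ≤ 0) (hA : ∀ u : List α, u ≠ [] → RateBound r u.length (automVal μ I F u))
    (w : List (α ⊕ Unit)) (u : List α) (hw : u.map Sum.inl ++ w ≠ []) :
    RateBound r (u.map Sum.inl ++ w).length
      (startVal I (prodL ((u.map Sum.inl ++ w).map (starMu μ I F)))) := by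
  induction w generalizing u with
  | nil =>
    have hu : u ≠ [] := by simpa using hw
    rw [List.append_nil, prodL_map_inl μ I F hu, List.length_map]
    exact (hA u hu).mono (runVal_le_startVal_liftMat hF _)
  | cons x w ih =>
    rcases x with a | t
    · simpa using ih (u ++ [a]) (by simp)
    have hstar : RateBound r (w.length + 1)
        (startVal I (prodL (starMat I F :: w.map (starMu μ I F)))) := by
      rcases eq_or_ne w [] with rfl | hw'
      · exact ((rateBound_zero r).of_le hr (Nat.zero_le 1)).mono (zero_le_startVal_starMat I F)
      · rw [prodL_cons _ (by simpa using hw')]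
        exact ((ih [] (by simpa using hw')).of_le hr (by simp)).mono
          (startVal_le_startVal_starMat_tmul hI _)
    rcases eq_or_ne u [] with rfl | hu
    · simpa [starMu_inr] using hstar
    have hprod : prodL ((u.map Sum.inl ++ Sum.inr t :: w).map (starMu μ I F)) =
        tmul (liftMat (prodL (u.map μ))) (prodL (starMat I F :: w.map (starMu μ I F))) := by
      rw [List.map_append, prodL_append (by simpa using hu) (by simp), prodL_map_inl μ I F hu]
      rfl
    rw [hprod, List.length_append, List.length_map, List.length_cons]
    exact ((hA u hu).add hstar).mono
      (runVal_add_startVal_le hI hF _ (finalRowsMax_prodL_starMat_cons I _))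

theorem min_rateInf_le_rateInf_starVal (hI : ∀ i, I i = 0 ∨ I i = ⊥)
    (hF : ∀ i, F i = 0 ∨ F i = ⊥) :
    min (rateInf (· ≠ []) (automVal μ I F) List.length) 0 ≤
      rateInf (· ≠ []) (starVal μ I F) List.length := by
  have hlen {β : Type} : ∀ v : List β, v ≠ [] → 0 < v.length := fun _ => List.length_pos_iff.2
  induction h : min (rateInf (· ≠ []) (automVal μ I F) List.length) 0 using EReal.rec with
  | bot => exact bot_le
  | top => exact absurd (h ▸ min_le_right _ _ : (⊤ : EReal) ≤ 0) (by simp)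
  | coe r =>
    have hr : r ≤ 0 := EReal.coe_le_coe_iff.1 (h ▸ min_le_right _ _)
    have hA := (coe_le_rateInf_iff hlen r).1 (h ▸ min_le_left _ _)
    refine (coe_le_rateInf_iff hlen r).2 fun w hw => ?_
    exact (rateBound_startVal_append hI hF hr hA w [] hw).mono (startVal_le_tnorm hI _)

end LowerBound

section UpperBound

variable {α : Type} {d : ℕ} {μ : α → Mat d} {I F : Fin d → Zmax}

/-- The `⋆` forces a run to read `M` from an initial state of `A`, and the rows of `P` force it to
leave `M` in a final state. -/
lemma tnorm_starMat_tmul_liftMat_tmul_le (M : Mat d) {P : Mat (d + 1)}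
    (hP : NonfinalRowsBot F P) :
    tnorm (tmul (starMat I F) (tmul (liftMat M) P)) ≤ runVal I M F + tnorm P := by
  refine tnorm_le fun i j => Finset.sup_le fun l _ => ?_
  by_cases hl : snocZero I l = 0
  · have hlM : tmul (liftMat M) P l j ≤ runVal I M F + tnorm P := by
      refine Finset.sup_le fun k _ => ?_
      induction l using Fin.lastCases with
      | last => simp
      | cast l =>
        induction k using Fin.lastCases with
        | last => simp
        | cast k =>
          by_cases hk : F k = 0
          · have := le_runVal I M F l k
            simp only [snocZero_castSucc, liftMat_castSucc] at hl ⊢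
            exact add_le_add (by simpa [hl, hk] using this) (le_tnorm P _ _)
          · simp [hP k hk j]
    calc starMat I F i l + tmul (liftMat M) P l j ≤ 0 + tmul (liftMat M) P l j :=
          add_le_add_left (starMat_le_zero I F i l) _
      _ ≤ runVal I M F + tnorm P := by simpa using hlM
  · simp [starMat_apply, hl]

variable (μ I F)

def starPow (u : List α) : ℕ → List (α ⊕ Unit)
  | 0 => [Sum.inr ()]
  | m + 1 => Sum.inr () :: (u.map Sum.inl ++ starPow u m)

lemma starPow_ne_nil (u : List α) (m : ℕ) : starPow u m ≠ [] := by
  cases m <;> simp [starPow]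

lemma length_starPow (u : List α) (m : ℕ) :
    (starPow u m).length = m * (u.length + 1) + 1 := by
  induction m with
  | zero => simp [starPow]
  | succ m ih => simp only [starPow, List.length_cons, List.length_append, List.length_map, ih]; ring

lemma nonfinalRowsBot_prodL_starPow (u : List α) (m : ℕ) :
    NonfinalRowsBot F (prodL ((starPow u m).map (starMu μ I F))) := by
  cases m <;> exact nonfinalRowsBot_prodL_starMat_cons I _

lemma starVal_starPow_le {u : List α} (hu : u ≠ []) (m : ℕ) :
    starVal μ I F (starPow u m) ≤ m • automVal μ I F u := by
  induction m with
  | zero =>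
    rw [zero_nsmul]
    exact tnorm_le (starMat_le_zero I F)
  | succ m ih =>
    have hprod : prodL ((starPow u (m + 1)).map (starMu μ I F)) = tmul (starMat I F)
        (tmul (liftMat (prodL (u.map μ))) (prodL ((starPow u m).map (starMu μ I F)))) := by
      rw [starPow, List.map_cons, starMu_inr, prodL_cons _ (by simp [hu]), List.map_append,
        prodL_append (by simpa using hu) (by simpa using starPow_ne_nil u m),
        prodL_map_inl μ I F hu]
    rw [starVal, hprod, succ_nsmul']
    exact (tnorm_starMat_tmul_liftMat_tmul_le _ (nonfinalRowsBot_prodL_starPow μ I F u m)).trans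
      (add_le_add le_rfl ih)

lemma tendsto_mul_div_mul_add_one (z : ℝ) {c : ℝ} (hc : 0 < c) :
    Tendsto (fun m : ℕ => m * z / (m * c + 1)) atTop (nhds (z / c)) := by
  have h : Tendsto (fun m : ℕ => z / (c + 1 / m)) atTop (nhds (z / (c + 0))) :=
    tendsto_const_nhds.div (tendsto_const_nhds.add tendsto_one_div_atTop_nhds_zero_nat)
      (by simpa using hc.ne')
  rw [add_zero] at h
  refine h.congr' ((eventually_ge_atTop 1).mono fun m hm => ?_)
  have : (m : ℝ) ≠ 0 := by positivity
  field_simp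

lemma rateInf_starVal_le (u : List α) (hu : u ≠ []) :
    rateInf (· ≠ []) (starVal μ I F) List.length ≤
      z2e (automVal μ I F u) / ((u.length + 1 : ℕ) : EReal) := by
  have hle (m : ℕ) : rateInf (· ≠ []) (starVal μ I F) List.length ≤
      z2e (m • automVal μ I F u) / ((m * (u.length + 1) + 1 : ℕ) : EReal) := by
    rw [← length_starPow]
    exact (rateInf_le (P := (· ≠ [])) (starPow_ne_nil u m)).trans
      (EReal.div_le_div_right_of_nonneg (by positivity) (z2e_mono (starVal_starPow_le μ I F hu m)))
  induction h : automVal μ I F u using WithBot.recBotCoe with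
  | bot =>
    refine (hle 1).trans (le_of_eq ?_) |>.trans bot_le
    rw [h, one_nsmul]
    exact EReal.bot_div_of_pos_ne_top (by positivity) (EReal.natCast_ne_top _)
  | coe z =>
    have hreal (m : ℕ) : rateInf (· ≠ []) (starVal μ I F) List.length ≤
        ((m * z / (m * ((u.length : ℝ) + 1) + 1) : ℝ) : EReal) := by
      refine (hle m).trans (le_of_eq ?_)
      rw [h, ← WithBot.coe_nsmul, z2e_coe, ← EReal.coe_coe_eq_natCast, ← EReal.coe_div,
        nsmul_eq_mul]
      push_cast
      rfl
    refine (ge_of_tendsto' (EReal.tendsto_coe.2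
      (tendsto_mul_div_mul_add_one (z : ℝ) (c := (u.length : ℝ) + 1) (by positivity))) hreal).trans
      (le_of_eq ?_)
    rw [z2e_coe, ← EReal.coe_coe_eq_natCast, ← EReal.coe_div]
    push_cast
    rfl

theorem rateInf_starVal_le_rateInf_succ :
    rateInf (· ≠ []) (starVal μ I F) List.length ≤
      rateInf (· ≠ []) (automVal μ I F) (fun u => u.length + 1) :=
  le_sInf fun _ ⟨u, hu, hx⟩ => hx ▸ rateInf_starVal_le μ I F u hu

end UpperBound

theorem stmt_16 {α : Type} {d : ℕ} (μ : α → Mat d) (I F : Fin d → Zmax)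
    (hI : ∀ i, I i = 0 ∨ I i = ⊥) (hF : ∀ i, F i = 0 ∨ F i = ⊥) :
    min (sInf {x : EReal | ∃ u : List α, u ≠ [] ∧
        x = z2e (runVal I (prodL (u.map μ)) F) / (u.length : EReal)}) 0 ≤
      sInf {x : EReal | ∃ w : List (α ⊕ Unit), w ≠ [] ∧
        x = z2e (tnorm (prodL (w.map (starMu μ I F)))) / (w.length : EReal)} ∧
    sInf {x : EReal | ∃ w : List (α ⊕ Unit), w ≠ [] ∧
        x = z2e (tnorm (prodL (w.map (starMu μ I F)))) / (w.length : EReal)} ≤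
      sInf {x : EReal | ∃ u : List α, u ≠ [] ∧
        x = z2e (runVal I (prodL (u.map μ)) F) / ((u.length + 1 : ℕ) : EReal)} ∧
    ((∀ u : List α, u ≠ [] → (0 : Zmax) ≤ runVal I (prodL (u.map μ)) F) ↔
      (∀ w : List (α ⊕ Unit), w ≠ [] →
        (0 : Zmax) ≤ tnorm (prodL (w.map (starMu μ I F))))) := by
  have lower := min_rateInf_le_rateInf_starVal (μ := μ) hI hF
  have upper := rateInf_starVal_le_rateInf_succ μ I F
  have hlen {β : Type} : ∀ v : List β, v ≠ [] → 0 < v.length := fun _ => List.length_pos_iff.2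
  have hlen_succ {β : Type} : ∀ v : List β, v ≠ [] → 0 < v.length + 1 :=
    fun v _ => v.length.succ_pos
  refine ⟨lower, upper, fun hA => ?_, fun hA' => ?_⟩
  · have h0 := (zero_le_rateInf_iff (f := automVal μ I F) hlen).2 hA
    exact (zero_le_rateInf_iff hlen).1 ((le_min h0 le_rfl).trans lower)
  · exact (zero_le_rateInf_iff hlen_succ).1 (((zero_le_rateInf_iff hlen).2 hA').trans upper)
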